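/- Let X, Y be Polish spaces, m a finite nonnegative measure on X, and u : X → Y measurable. The measure μ_u := (Id, u)_# m on X × Y is an extreme point of the convex set of nonnegative measures on X × Y whose first marginal is m: if μ_u = (μ₁ + μ₂)/2 with μ₁, μ₂ both having first marginal m, then μ₁ = μ₂ = μ_u. -/
import Mathlib


open MeasureTheory Filter Topology
open scoped ENNReal

noncomputable section

/-- Auxiliary: a measure on `X × Y` with first marginal `m` which is concentrated on the
graph of `u` equals `(Id, u)_# m`. -/
theorem graph_concentrated_eq_pushforward {X Y : Type*}
    [MeasurableSpace X] [TopologicalSpace X] [PolishSpace X] [BorelSpace X]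
    [MeasurableSpace Y] [TopologicalSpace Y] [PolishSpace Y] [BorelSpace Y]
    (m : Measure X) (u : X → Y) (hu : Measurable u) (ν : Measure (X × Y))
    (hν : ν.map Prod.fst = m)
    (hG : ν {p : X × Y | p.2 ≠ u p.1} = 0) :
    ν = m.map (fun x => (x, u x)) := by
  have hmeas : Measurable fun x => (x, u x) := measurable_id.prodMk hu
  have hGmeas : MeasurableSet {p : X × Y | p.2 = u p.1} :=
    StronglyMeasurable.measurableSet_eq_fun measurable_snd.stronglyMeasurable
      (hu.comp measurable_fst).stronglyMeasurable
  have key : ∀ T : Set (X × Y), MeasurableSet T →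
      ν T = ν (T ∩ {p : X × Y | p.2 = u p.1}) := by
    intro T hT
    have hdiff : ν (T \ {p : X × Y | p.2 = u p.1}) = 0 :=
      measure_mono_null (fun p hp => hp.2) hG
    have := measure_inter_add_diff (μ := ν) T hGmeas
    rw [hdiff, add_zero] at this
    exact this.symm
  ext S hS
  rw [Measure.map_apply hmeas hS]
  set A := (fun x => (x, u x)) ⁻¹' S with hA
  have hAm : MeasurableSet A := hmeas hS
  have hset : S ∩ {p : X × Y | p.2 = u p.1}
      = (Prod.fst ⁻¹' A) ∩ {p : X × Y | p.2 = u p.1} := by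
    ext ⟨x, y⟩
    simp only [Set.mem_inter_iff, Set.mem_setOf_eq, Set.mem_preimage, hA]
    constructor
    · rintro ⟨hS', rfl⟩; exact ⟨hS', rfl⟩
    · rintro ⟨hS', rfl⟩; exact ⟨hS', rfl⟩
  have : ν S = ν (Prod.fst ⁻¹' A) := by
    rw [key S hS, hset, ← key _ (measurable_fst hAm)]
  rw [this, ← Measure.map_apply measurable_fst hAm, hν]

/-- for Polish spaces `X, Y`, a finite measure `m` on `X` and a measurable
map `u : X → Y`, the measure `μ_u = (Id, u)_# m` is an extreme point of the convex set of
nonnegative measures on `X × Y` with first marginal `m`. -/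
theorem pushforward_graph_extreme {X Y : Type*}
    [MeasurableSpace X] [TopologicalSpace X] [PolishSpace X] [BorelSpace X]
    [MeasurableSpace Y] [TopologicalSpace Y] [PolishSpace Y] [BorelSpace Y]
    (m : Measure X) [IsFiniteMeasure m] (u : X → Y) (hu : Measurable u)
    (μ₁ μ₂ : Measure (X × Y))
    (h₁ : μ₁.map Prod.fst = m) (h₂ : μ₂.map Prod.fst = m)
    (h : m.map (fun x => (x, u x)) = (2 : ℝ≥0∞)⁻¹ • μ₁ + (2 : ℝ≥0∞)⁻¹ • μ₂) :
    μ₁ = m.map (fun x => (x, u x)) ∧ μ₂ = m.map (fun x => (x, u x)) := by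
  have hmeas : Measurable fun x => (x, u x) := measurable_id.prodMk hu
  have hGmeas : MeasurableSet {p : X × Y | p.2 = u p.1} :=
    StronglyMeasurable.measurableSet_eq_fun measurable_snd.stronglyMeasurable
      (hu.comp measurable_fst).stronglyMeasurable
  have hGc : MeasurableSet {p : X × Y | p.2 ≠ u p.1} := hGmeas.compl
  have hzero : (m.map fun x => (x, u x)) {p : X × Y | p.2 ≠ u p.1} = 0 := by
    rw [Measure.map_apply hmeas hGc]
    convert measure_empty (μ := m)
    ext x
    simp
  have h1z : μ₁ {p : X × Y | p.2 ≠ u p.1} = 0 := by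
    have hle : (2 : ℝ≥0∞)⁻¹ * μ₁ {p : X × Y | p.2 ≠ u p.1}
        ≤ (m.map fun x => (x, u x)) {p : X × Y | p.2 ≠ u p.1} := by
      rw [h]
      simp only [Measure.add_apply, Measure.smul_apply, smul_eq_mul]
      exact le_add_right le_rfl
    rw [hzero, nonpos_iff_eq_zero, mul_eq_zero] at hle
    simpa using hle.resolve_left (by norm_num)
  have h2z : μ₂ {p : X × Y | p.2 ≠ u p.1} = 0 := by
    have hle : (2 : ℝ≥0∞)⁻¹ * μ₂ {p : X × Y | p.2 ≠ u p.1}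
        ≤ (m.map fun x => (x, u x)) {p : X × Y | p.2 ≠ u p.1} := by
      rw [h]
      simp only [Measure.add_apply, Measure.smul_apply, smul_eq_mul]
      exact le_add_left le_rfl
    rw [hzero, nonpos_iff_eq_zero, mul_eq_zero] at hle
    simpa using hle.resolve_left (by norm_num)
  exact ⟨graph_concentrated_eq_pushforward m u hu μ₁ h₁ h1z,
    graph_concentrated_eq_pushforward m u hu μ₂ h₂ h2z⟩
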